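/- arXiv:2508.00845 — 8 statements merged into one kernel-verified Lean document; each statement's English description precedes it below -/
import Mathlib

section
/- Let a, b, e be vectors in a complex inner product space H with ‖e‖ = 1, let α ∈ ℂ with α ≠ 0, and let β ≥ 0. Then |⟨a,e⟩·⟨e,b⟩|² ≤ ((β + (β+1)·max{1, |α−1|²}) / (|α|²(β+1)))·‖a‖²‖b‖² + ((1 + 2(β+1)·max{1, |α−1|}) / (|α|²(β+1)))·‖a‖‖b‖·|⟨a,b⟩|. -/
/-!
For a unit vector `e` let `P b = ⟪e, b⟫ e`. Then `(c ⟪e, b⟫) e - b = (c - 1) P b - (b - P b)` is an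
orthogonal sum, so its norm is at most `max 1 ‖c - 1‖ * ‖b‖`. Pairing it with `a` gives
`‖c‖ ‖⟪a, e⟫⟪e, b⟫‖ ≤ max 1 ‖c - 1‖ ‖a‖ ‖b‖ + ‖⟪a, b⟫‖` (Buzano's inequality for `c = 2`).
Squaring, and absorbing `‖⟪a, b⟫‖²` via Cauchy–Schwarz as
`(β + 1) ‖⟪a, b⟫‖² ≤ β ‖a‖² ‖b‖² + ‖a‖ ‖b‖ ‖⟪a, b⟫‖`, yields the inequality.
-/

open scoped InnerProductSpace

section

variable {𝕜 E : Type*} [RCLike 𝕜] [NormedAddCommGroup E] [InnerProductSpace 𝕜 E]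

theorem norm_smul_add_le_max_one_mul_of_inner_eq_zero {u w : E} (h : ⟪u, w⟫_𝕜 = 0) (c : 𝕜) :
    ‖c • u + w‖ ≤ max 1 ‖c‖ * ‖u + w‖ := by
  have hcu : ⟪c • u, w⟫_𝕜 = 0 := by rw [inner_smul_left, h, mul_zero]
  have hM : ‖c‖ ≤ max 1 ‖c‖ := le_max_right _ _
  have hM1 : 1 ≤ max 1 ‖c‖ := le_max_left _ _
  rw [mul_self_le_mul_self_iff (norm_nonneg _) (by positivity),
    norm_add_sq_eq_norm_sq_add_norm_sq_of_inner_eq_zero _ _ hcu,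
    mul_mul_mul_comm, norm_add_sq_eq_norm_sq_add_norm_sq_of_inner_eq_zero _ _ h, norm_smul]
  have hc2 : ‖c‖ * ‖c‖ ≤ max 1 ‖c‖ * max 1 ‖c‖ := mul_self_le_mul_self (norm_nonneg _) hM
  have h12 : 1 ≤ max 1 ‖c‖ * max 1 ‖c‖ := one_le_mul_of_one_le_of_one_le hM1 hM1
  nlinarith [mul_self_nonneg ‖u‖, mul_self_nonneg ‖w‖]

theorem inner_inner_smul_sub_inner_smul_eq_zero {e : E} (he : ‖e‖ = 1) (b : E) :
    ⟪⟪e, b⟫_𝕜 • e, b - ⟪e, b⟫_𝕜 • e⟫_𝕜 = 0 := by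
  rw [inner_smul_left, inner_sub_right, inner_smul_right, inner_self_eq_norm_sq_to_K, he]
  simp

theorem norm_mul_inner_smul_sub_le {e : E} (he : ‖e‖ = 1) (c : 𝕜) (b : E) :
    ‖(c * ⟪e, b⟫_𝕜) • e - b‖ ≤ max 1 ‖c - 1‖ * ‖b‖ := by
  have key := norm_smul_add_le_max_one_mul_of_inner_eq_zero
    (inner_inner_smul_sub_inner_smul_eq_zero he b) (1 - c)
  rw [add_sub_cancel, norm_sub_rev 1] at key
  rw [norm_sub_rev,
    show b - (c * ⟪e, b⟫_𝕜) • e = (1 - c) • ⟪e, b⟫_𝕜 • e + (b - ⟪e, b⟫_𝕜 • e) by module]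
  exact key

theorem norm_mul_inner_mul_inner_le {e : E} (he : ‖e‖ = 1) (c : 𝕜) (a b : E) :
    ‖c‖ * ‖⟪a, e⟫_𝕜 * ⟪e, b⟫_𝕜‖ ≤ max 1 ‖c - 1‖ * (‖a‖ * ‖b‖) + ‖⟪a, b⟫_𝕜‖ := by
  have hsplit : c * (⟪a, e⟫_𝕜 * ⟪e, b⟫_𝕜) = ⟪a, (c * ⟪e, b⟫_𝕜) • e - b⟫_𝕜 + ⟪a, b⟫_𝕜 := by
    rw [inner_sub_right, inner_smul_right, sub_add_cancel]
    ring
  calc ‖c‖ * ‖⟪a, e⟫_𝕜 * ⟪e, b⟫_𝕜‖ = ‖⟪a, (c * ⟪e, b⟫_𝕜) • e - b⟫_𝕜 + ⟪a, b⟫_𝕜‖ := by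
        rw [← norm_mul, hsplit]
    _ ≤ ‖a‖ * ‖(c * ⟪e, b⟫_𝕜) • e - b‖ + ‖⟪a, b⟫_𝕜‖ :=
        (norm_add_le _ _).trans (add_le_add_left (norm_inner_le_norm _ _) _)
    _ ≤ ‖a‖ * (max 1 ‖c - 1‖ * ‖b‖) + ‖⟪a, b⟫_𝕜‖ := by
        gcongr
        exact norm_mul_inner_smul_sub_le he c b
    _ = max 1 ‖c - 1‖ * (‖a‖ * ‖b‖) + ‖⟪a, b⟫_𝕜‖ := by ring

end

theorem max_one_sq_eq_sq_max_one {x : ℝ} (hx : 0 ≤ x) : max 1 (x ^ 2) = max 1 x ^ 2 := by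
  rw [pow_left_monotoneOn.map_max (zero_le_one' ℝ) hx, one_pow]

/-- Extended Buzano inequality with parameters `α ∈ ℂ \ {0}` and `β ≥ 0`. -/
theorem extended_buzano {H : Type*} [NormedAddCommGroup H] [InnerProductSpace ℂ H]
    (a b e : H) (he : ‖e‖ = 1) (α : ℂ) (hα : α ≠ 0) (β : ℝ) (hβ : 0 ≤ β) :
    ‖(inner ℂ a e : ℂ) * (inner ℂ e b : ℂ)‖ ^ 2 ≤
      (β + (β + 1) * max 1 (‖α - 1‖ ^ 2)) / (‖α‖ ^ 2 * (β + 1)) * (‖a‖ ^ 2 * ‖b‖ ^ 2)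
        + (1 + 2 * (β + 1) * max 1 ‖α - 1‖) / (‖α‖ ^ 2 * (β + 1))
            * (‖a‖ * ‖b‖ * ‖(inner ℂ a b : ℂ)‖) := by
  have hbound := norm_mul_inner_mul_inner_le he α a b
  have hab : ‖⟪a, b⟫_ℂ‖ ≤ ‖a‖ * ‖b‖ := norm_inner_le_norm a b
  have hden : 0 < ‖α‖ ^ 2 * (β + 1) := by
    have := norm_pos_iff.mpr hα
    positivity
  set p := ‖⟪a, e⟫_ℂ * ⟪e, b⟫_ℂ‖
  set s := ‖⟪a, b⟫_ℂ‖
  set A := ‖a‖ * ‖b‖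
  set M := max 1 ‖α - 1‖
  have hsq : (‖α‖ * p) ^ 2 ≤ (M * A + s) ^ 2 := pow_le_pow_left₀ (by positivity) hbound 2
  have hs : (β + 1) * s ^ 2 ≤ β * A ^ 2 + A * s := by
    nlinarith [mul_nonneg (sub_nonneg.mpr hab) (by positivity : 0 ≤ β * (A + s) + s)]
  rw [max_one_sq_eq_sq_max_one (norm_nonneg _), div_mul_eq_mul_div, div_mul_eq_mul_div,
    ← add_div, le_div_iff₀ hden, show ‖a‖ ^ 2 * ‖b‖ ^ 2 = A ^ 2 by ring]
  nlinarith [mul_le_mul_of_nonneg_left hsq (by linarith : 0 ≤ β + 1)]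
end

section
/- Let a, b, e be vectors in a complex inner product space H with ‖e‖ = 1, and let β ≥ 0. Then |⟨a,e⟩·⟨e,b⟩|² ≤ (1/4)·( ((2β+1)/(β+1))·‖a‖²‖b‖² + ((2β+3)/(β+1))·‖a‖‖b‖·|⟨a,b⟩| ). -/
/-!
Buzano's inequality `2 |⟪a, e⟫ ⟪e, b⟫| ≤ ‖a‖ ‖b‖ + |⟪a, b⟫|` comes from Cauchy–Schwarz applied
to `⟪R a, b⟫ = 2 ⟪a, e⟫ ⟪e, b⟫ - ⟪a, b⟫`, where `R` is the (isometric) reflection in the line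
through `e`. Squaring it, the claim reduces to `(x + t)² ≤ ((2β+1) x² + (2β+3) x t) / (β+1)`
for `x = ‖a‖ ‖b‖ ≥ t = |⟪a, b⟫|`, and the difference of the two sides is
`(x - t)(β x + (β+1) t) / (β+1)`.
-/

open Submodule

section Buzano

variable {𝕜 E : Type*} [RCLike 𝕜] [NormedAddCommGroup E] [InnerProductSpace 𝕜 E]

theorem inner_reflection_span_singleton_left {e : E} (he : ‖e‖ = 1) (a b : E) :
    inner 𝕜 ((𝕜 ∙ e).reflection a) b = 2 * (inner 𝕜 a e * inner 𝕜 e b) - inner 𝕜 a b := by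
  rw [reflection_apply, starProjection_unit_singleton 𝕜 he, inner_sub_left, two_smul,
    inner_add_left, inner_smul_left, inner_conj_symm]
  ring

theorem two_mul_norm_inner_mul_inner_le {e : E} (he : ‖e‖ = 1) (a b : E) :
    2 * ‖inner 𝕜 a e * inner 𝕜 e b‖ ≤ ‖a‖ * ‖b‖ + ‖inner 𝕜 a b‖ := by
  have hrefl : ‖2 * (inner 𝕜 a e * inner 𝕜 e b) - inner 𝕜 a b‖ ≤ ‖a‖ * ‖b‖ := by
    rw [← inner_reflection_span_singleton_left he, ← (𝕜 ∙ e).reflection.norm_map a]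
    exact norm_inner_le_norm _ _
  have htriangle := norm_sub_norm_le (2 * (inner 𝕜 a e * inner 𝕜 e b)) (inner 𝕜 a b)
  rw [norm_mul (2 : 𝕜), RCLike.norm_two] at htriangle
  linarith

end Buzano

theorem add_sq_le_div_mul_add_div_mul_of_le {x t β : ℝ} (ht : 0 ≤ t) (htx : t ≤ x) (hβ : 0 ≤ β) :
    (x + t) ^ 2 ≤ (2 * β + 1) / (β + 1) * x ^ 2 + (2 * β + 3) / (β + 1) * (x * t) := by
  rw [div_mul_eq_mul_div, div_mul_eq_mul_div, ← add_div, le_div_iff₀ (by linarith)]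
  nlinarith [mul_nonneg (sub_nonneg.2 htx) (by nlinarith : 0 ≤ β * x + (β + 1) * t)]

/-- Buzano-type inequality with parameter `β ≥ 0`. -/
theorem buzano_beta {H : Type*} [NormedAddCommGroup H] [InnerProductSpace ℂ H]
    (a b e : H) (he : ‖e‖ = 1) (β : ℝ) (hβ : 0 ≤ β) :
    ‖(inner ℂ a e : ℂ) * (inner ℂ e b : ℂ)‖ ^ 2 ≤
      1 / 4 * ((2 * β + 1) / (β + 1) * (‖a‖ ^ 2 * ‖b‖ ^ 2)
        + (2 * β + 3) / (β + 1) * (‖a‖ * ‖b‖ * ‖(inner ℂ a b : ℂ)‖)) := by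
  have hbuzano := two_mul_norm_inner_mul_inner_le (𝕜 := ℂ) he a b
  have hreal := add_sq_le_div_mul_add_div_mul_of_le (norm_nonneg (inner ℂ a b))
    (norm_inner_le_norm a b) hβ
  calc ‖inner ℂ a e * inner ℂ e b‖ ^ 2 ≤ (‖a‖ * ‖b‖ + ‖inner ℂ a b‖) ^ 2 / 4 := by
        nlinarith [norm_nonneg (inner ℂ a e * inner ℂ e b)]
    _ ≤ _ := by
        rw [mul_pow] at hreal
        linarith
end

section
/- Let a, b, e be vectors in a complex inner product space H with ‖e‖ = 1, let α ∈ ℂ with α ≠ 0, and let β ≥ 0. Then |⟨a,e⟩·⟨e,b⟩|² ≤ ((2(β+1)·max{1, |α−1|²} + 2β) / (|α|²(β+1)))·‖a‖²‖b‖² + (2 / (|α|²(β+1)))·|⟨a,b⟩|². -/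
/-!
Put `v = a - (conj α * ⟪e, a⟫) • e`. Then `⟪v, b⟫ = ⟪a, b⟫ - α ⟪a, e⟫ ⟪e, b⟫`, and since `‖e‖ = 1`,
`‖v‖² = ‖a‖² + (|α - 1|² - 1) |⟪e, a⟫|² ≤ max 1 |α - 1|² ‖a‖²`. The triangle inequality and
Cauchy–Schwarz for `⟪v, b⟫` give
`|α|² |⟪a, e⟫ ⟪e, b⟫|² ≤ 2 max 1 |α - 1|² ‖a‖² ‖b‖² + 2 |⟪a, b⟫|²`,
and the parameter `β` only trades part of `|⟪a, b⟫|²` for the larger `‖a‖² ‖b‖²`.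
-/

open scoped InnerProductSpace ComplexConjugate

section Buzano

variable {𝕜 H : Type*} [RCLike 𝕜] [NormedAddCommGroup H] [InnerProductSpace 𝕜 H]

theorem inner_sub_smul_inner_left (a b e : H) (α : 𝕜) :
    ⟪a - (conj α * ⟪e, a⟫_𝕜) • e, b⟫_𝕜 = ⟪a, b⟫_𝕜 - α * (⟪a, e⟫_𝕜 * ⟪e, b⟫_𝕜) := by
  rw [inner_sub_left, inner_smul_left, map_mul, RCLike.conj_conj, inner_conj_symm]
  ring

theorem norm_sub_smul_inner_sq {e : H} (he : ‖e‖ = 1) (a : H) (α : 𝕜) :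
    ‖a - (conj α * ⟪e, a⟫_𝕜) • e‖ ^ 2 = ‖a‖ ^ 2 + (‖α - 1‖ ^ 2 - 1) * ‖⟪e, a⟫_𝕜‖ ^ 2 := by
  have h_re : RCLike.re ⟪a, (conj α * ⟪e, a⟫_𝕜) • e⟫_𝕜 = RCLike.re α * ‖⟪e, a⟫_𝕜‖ ^ 2 := by
    rw [inner_smul_right, ← inner_conj_symm a e, mul_assoc, RCLike.mul_conj, ← RCLike.ofReal_pow,
      RCLike.re_mul_ofReal, RCLike.conj_re]
  have h_sub_one : ‖α - 1‖ ^ 2 = ‖α‖ ^ 2 - 2 * RCLike.re α + 1 := by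
    rw [← RCLike.normSq_eq_def', RCLike.normSq_sub, RCLike.normSq_one, RCLike.normSq_eq_def']
    simp only [map_one, mul_one]
    ring
  rw [norm_sub_sq (𝕜 := 𝕜), h_re, norm_smul, he, mul_one, norm_mul, RCLike.norm_conj, h_sub_one]
  ring

theorem norm_sub_smul_inner_sq_le {e : H} (he : ‖e‖ = 1) (a : H) (α : 𝕜) :
    ‖a - (conj α * ⟪e, a⟫_𝕜) • e‖ ^ 2 ≤ max 1 (‖α - 1‖ ^ 2) * ‖a‖ ^ 2 := by
  have h_proj : ‖⟪e, a⟫_𝕜‖ ^ 2 ≤ ‖a‖ ^ 2 := by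
    gcongr
    simpa [he] using norm_inner_le_norm (𝕜 := 𝕜) e a
  rw [norm_sub_smul_inner_sq he]
  rcases le_total (‖α - 1‖ ^ 2) 1 with h | h
  · rw [max_eq_left h]
    nlinarith [sq_nonneg ‖⟪e, a⟫_𝕜‖]
  · rw [max_eq_right h]
    nlinarith

theorem norm_mul_inner_mul_inner_sq_le {e : H} (he : ‖e‖ = 1) (a b : H) (α : 𝕜) :
    ‖α‖ ^ 2 * ‖⟪a, e⟫_𝕜 * ⟪e, b⟫_𝕜‖ ^ 2 ≤
      2 * max 1 (‖α - 1‖ ^ 2) * (‖a‖ ^ 2 * ‖b‖ ^ 2) + 2 * ‖⟪a, b⟫_𝕜‖ ^ 2 := by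
  set v := a - (conj α * ⟪e, a⟫_𝕜) • e
  have h_tri : ‖α * (⟪a, e⟫_𝕜 * ⟪e, b⟫_𝕜)‖ ≤ ‖⟪a, b⟫_𝕜‖ + ‖v‖ * ‖b‖ := by
    calc ‖α * (⟪a, e⟫_𝕜 * ⟪e, b⟫_𝕜)‖ = ‖⟪a, b⟫_𝕜 - ⟪v, b⟫_𝕜‖ := by
          rw [inner_sub_smul_inner_left, sub_sub_cancel]
      _ ≤ ‖⟪a, b⟫_𝕜‖ + ‖⟪v, b⟫_𝕜‖ := norm_sub_le _ _
      _ ≤ ‖⟪a, b⟫_𝕜‖ + ‖v‖ * ‖b‖ := by grw [norm_inner_le_norm v b]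
  have h_v : ‖v‖ ^ 2 * ‖b‖ ^ 2 ≤ max 1 (‖α - 1‖ ^ 2) * (‖a‖ ^ 2 * ‖b‖ ^ 2) := by
    rw [← mul_assoc]
    gcongr
    exact norm_sub_smul_inner_sq_le he a α
  calc ‖α‖ ^ 2 * ‖⟪a, e⟫_𝕜 * ⟪e, b⟫_𝕜‖ ^ 2 = ‖α * (⟪a, e⟫_𝕜 * ⟪e, b⟫_𝕜)‖ ^ 2 := by
        simp only [norm_mul, mul_pow]
    _ ≤ (‖⟪a, b⟫_𝕜‖ + ‖v‖ * ‖b‖) ^ 2 := by gcongr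
    _ ≤ 2 * (‖⟪a, b⟫_𝕜‖ ^ 2 + (‖v‖ * ‖b‖) ^ 2) := add_sq_le
    _ ≤ _ := by rw [mul_pow]; linarith

end Buzano

/-- Extended Buzano inequality, squared form, with parameters `α ∈ ℂ \ {0}` and `β ≥ 0`. -/
theorem extended_buzano_sq {H : Type*} [NormedAddCommGroup H] [InnerProductSpace ℂ H]
    (a b e : H) (he : ‖e‖ = 1) (α : ℂ) (hα : α ≠ 0) (β : ℝ) (hβ : 0 ≤ β) :
    ‖(inner ℂ a e : ℂ) * (inner ℂ e b : ℂ)‖ ^ 2 ≤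
      (2 * (β + 1) * max 1 (‖α - 1‖ ^ 2) + 2 * β) / (‖α‖ ^ 2 * (β + 1))
          * (‖a‖ ^ 2 * ‖b‖ ^ 2)
        + 2 / (‖α‖ ^ 2 * (β + 1)) * ‖(inner ℂ a b : ℂ)‖ ^ 2 := by
  have h_core := norm_mul_inner_mul_inner_sq_le he a b α
  have h_cs : ‖(inner ℂ a b : ℂ)‖ ^ 2 ≤ ‖a‖ ^ 2 * ‖b‖ ^ 2 := by
    rw [← mul_pow]; gcongr; exact norm_inner_le_norm a b
  have h_den : 0 < ‖α‖ ^ 2 * (β + 1) := by positivity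
  rw [div_mul_eq_mul_div, div_mul_eq_mul_div, ← add_div, le_div_iff₀ h_den]
  -- multiply the core bound by `β + 1`, then absorb `2β‖⟪a, b⟫‖²` using Cauchy–Schwarz
  linarith [mul_le_mul_of_nonneg_left h_core (by linarith : 0 ≤ β + 1),
    mul_le_mul_of_nonneg_left h_cs hβ]
end

section
/- Let a, b, e be vectors in a complex inner product space H with ‖e‖ = 1, and let β ≥ 0. Then |⟨a,e⟩·⟨e,b⟩|² ≤ (1/2)·( ((2β+1)/(β+1))·‖a‖²‖b‖² + (1/(β+1))·|⟨a,b⟩|² ). -/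
/-!
Reflecting `b` in the line `𝕜 ∙ e` gives `R b = 2 ⟪e, b⟫ e - b` with `‖R b‖ = ‖b‖`, so
`2 ⟪a, e⟫ ⟪e, b⟫ = ⟪a, b⟫ + ⟪a, R b⟫`, and Cauchy–Schwarz yields Buzano's inequality
`|⟪a, e⟫ ⟪e, b⟫| ≤ (‖a‖ ‖b‖ + |⟪a, b⟫|) / 2`. Squaring it, the `β`-form follows from
`C = |⟪a, b⟫| ≤ ‖a‖ ‖b‖ = A`: `4 (β + 1)` times the gap is `(A - C)² + β (A - C) (3A + C) ≥ 0`.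
-/

open scoped InnerProductSpace

theorem norm_inner_mul_inner_le_of_norm_eq_one {𝕜 E : Type*} [RCLike 𝕜] [NormedAddCommGroup E]
    [InnerProductSpace 𝕜 E] {e : E} (he : ‖e‖ = 1) (a b : E) :
    ‖⟪a, e⟫_𝕜 * ⟪e, b⟫_𝕜‖ ≤ (‖a‖ * ‖b‖ + ‖⟪a, b⟫_𝕜‖) / 2 := by
  set R := (𝕜 ∙ e).reflection
  have hsum : 2 * (⟪a, e⟫_𝕜 * ⟪e, b⟫_𝕜) = ⟪a, b⟫_𝕜 + ⟪a, R b⟫_𝕜 := by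
    rw [Submodule.reflection_apply, Submodule.starProjection_unit_singleton 𝕜 he, inner_sub_right,
      inner_smul_right_eq_smul, inner_smul_right]
    simp only [nsmul_eq_mul, Nat.cast_ofNat]
    ring
  have hnorm : ‖2 * (⟪a, e⟫_𝕜 * ⟪e, b⟫_𝕜)‖ ≤ ‖⟪a, b⟫_𝕜‖ + ‖a‖ * ‖b‖ := by
    calc ‖2 * (⟪a, e⟫_𝕜 * ⟪e, b⟫_𝕜)‖ ≤ ‖⟪a, b⟫_𝕜‖ + ‖⟪a, R b⟫_𝕜‖ := hsum ▸ norm_add_le _ _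
      _ ≤ ‖⟪a, b⟫_𝕜‖ + ‖a‖ * ‖R b‖ := by gcongr; exact norm_inner_le_norm a (R b)
      _ = ‖⟪a, b⟫_𝕜‖ + ‖a‖ * ‖b‖ := by rw [LinearIsometryEquiv.norm_map]
  rw [norm_mul, RCLike.norm_ofNat] at hnorm
  linarith

theorem sq_add_div_two_le_of_le {A C β : ℝ} (hC : 0 ≤ C) (hCA : C ≤ A) (hβ : 0 ≤ β) :
    ((A + C) / 2) ^ 2 ≤ 1 / 2 * ((2 * β + 1) / (β + 1) * A ^ 2 + 1 / (β + 1) * C ^ 2) := by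
  have hβ1 : 0 < β + 1 := by linarith
  field_simp
  nlinarith [sq_nonneg (A - C),
    mul_nonneg (mul_nonneg hβ (sub_nonneg.2 hCA)) (by linarith : 0 ≤ 3 * A + C)]

/-- Buzano-type inequality, squared form, with parameter `β ≥ 0`. -/
theorem buzano_beta_sq {H : Type*} [NormedAddCommGroup H] [InnerProductSpace ℂ H]
    (a b e : H) (he : ‖e‖ = 1) (β : ℝ) (hβ : 0 ≤ β) :
    ‖(inner ℂ a e : ℂ) * (inner ℂ e b : ℂ)‖ ^ 2 ≤
      1 / 2 * ((2 * β + 1) / (β + 1) * (‖a‖ ^ 2 * ‖b‖ ^ 2)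
        + 1 / (β + 1) * ‖(inner ℂ a b : ℂ)‖ ^ 2) := by
  calc ‖(inner ℂ a e : ℂ) * (inner ℂ e b : ℂ)‖ ^ 2
      ≤ ((‖a‖ * ‖b‖ + ‖(inner ℂ a b : ℂ)‖) / 2) ^ 2 := by
        gcongr; exact norm_inner_mul_inner_le_of_norm_eq_one he a b
    _ ≤ _ := by
        rw [← mul_pow]
        exact sq_add_div_two_le_of_le (norm_nonneg _) (norm_inner_le_norm a b) hβ
end

section
/- Let a, b, e be vectors in a complex inner product space H with ‖e‖ = 1, let β ≥ 0, and let r ≥ 1 be a real number. Then |⟨a,e⟩·⟨e,b⟩|^{2r} ≤ (1/4)·( ((2β+1)/(β+1))·‖a‖^{2r}‖b‖^{2r} + ((2β+3)/(β+1))·‖a‖^{r}‖b‖^{r}·|⟨a,b⟩|^{r} ), where all powers are real powers of nonnegative real numbers. -/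
/-!
Write `B = ‖a‖‖b‖` and `C = |⟨a,b⟩| ≤ B`. Buzano's inequality `|⟨a,e⟩⟨e,b⟩| ≤ (B + C)/2` is
Cauchy–Schwarz applied to the reflection of `a` in the line `ℂ e`, which is an isometry with
`⟨Ra, b⟩ = 2⟨a,e⟩⟨e,b⟩ - ⟨a,b⟩`. Since `C² ≤ BC`, `((B + C)/2)² ≤ B²/4 + 3BC/4`, and convexity of
`t ↦ t^r` gives `((B + C)/2)^{2r} ≤ B^{2r}/4 + 3B^rC^r/4`. Moving weight `β/(4(β+1))` from the
second term to the larger first one gives the `β`-weighted bound.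
-/

open scoped InnerProductSpace

theorem rpow_two_mul_half_add_le {B C r : ℝ} (hC : 0 ≤ C) (hCB : C ≤ B) (hr : 1 ≤ r) :
    ((B + C) / 2) ^ (2 * r) ≤ 1 / 4 * B ^ (2 * r) + 3 / 4 * (B ^ r * C ^ r) := by
  have hB : 0 ≤ B := hC.trans hCB
  have hsq : ((B + C) / 2) ^ 2 ≤ 1 / 4 * B ^ 2 + 3 / 4 * (B * C) := by nlinarith
  calc ((B + C) / 2) ^ (2 * r) = (((B + C) / 2) ^ 2) ^ r := by
        rw [Real.rpow_mul (by positivity)]; norm_cast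
    _ ≤ (1 / 4 * B ^ 2 + 3 / 4 * (B * C)) ^ r := by gcongr
    _ ≤ 1 / 4 * (B ^ 2) ^ r + 3 / 4 * (B * C) ^ r :=
        (convexOn_rpow hr).2 (Set.mem_Ici.2 (by positivity)) (Set.mem_Ici.2 (by positivity))
          (by norm_num) (by norm_num) (by norm_num)
    _ = 1 / 4 * B ^ (2 * r) + 3 / 4 * (B ^ r * C ^ r) := by
        rw [Real.rpow_mul hB, Real.mul_rpow hB hC]; norm_cast

theorem quarter_add_three_quarters_le_of_le {β X Y : ℝ} (hβ : 0 ≤ β) (hYX : Y ≤ X) :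
    1 / 4 * X + 3 / 4 * Y ≤ 1 / 4 * ((2 * β + 1) / (β + 1) * X + (2 * β + 3) / (β + 1) * Y) := by
  have hgap : 1 / 4 * ((2 * β + 1) / (β + 1) * X + (2 * β + 3) / (β + 1) * Y)
      - (1 / 4 * X + 3 / 4 * Y) = β / (4 * (β + 1)) * (X - Y) := by
    field_simp
    ring
  have hgap_nonneg : 0 ≤ β / (4 * (β + 1)) * (X - Y) :=
    mul_nonneg (by positivity) (sub_nonneg.2 hYX)
  linarith

/-- Buzano-type inequality with real power `r ≥ 1` and parameter `β ≥ 0`.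
All powers are real powers (`Real.rpow`) of nonnegative real numbers. -/
theorem buzano_beta_rpow {H : Type*} [NormedAddCommGroup H] [InnerProductSpace ℂ H]
    (a b e : H) (he : ‖e‖ = 1) (β : ℝ) (hβ : 0 ≤ β) (r : ℝ) (hr : 1 ≤ r) :
    ‖(inner ℂ a e : ℂ) * (inner ℂ e b : ℂ)‖ ^ (2 * r) ≤
      1 / 4 * ((2 * β + 1) / (β + 1) * (‖a‖ ^ (2 * r) * ‖b‖ ^ (2 * r))
        + (2 * β + 3) / (β + 1) * (‖a‖ ^ r * ‖b‖ ^ r * ‖(inner ℂ a b : ℂ)‖ ^ r)) := by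
  have hCB : ‖inner ℂ a b‖ ≤ ‖a‖ * ‖b‖ := norm_inner_le_norm a b
  have hpow : (‖a‖ * ‖b‖) ^ r * ‖inner ℂ a b‖ ^ r ≤ (‖a‖ * ‖b‖) ^ (2 * r) :=
    calc (‖a‖ * ‖b‖) ^ r * ‖inner ℂ a b‖ ^ r ≤ (‖a‖ * ‖b‖) ^ r * (‖a‖ * ‖b‖) ^ r := by gcongr
      _ = (‖a‖ * ‖b‖) ^ (2 * r) := by
        rw [two_mul, Real.rpow_add' (by positivity) (by linarith : r + r ≠ 0)]
  calc ‖inner ℂ a e * inner ℂ e b‖ ^ (2 * r)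
      ≤ ((‖a‖ * ‖b‖ + ‖inner ℂ a b‖) / 2) ^ (2 * r) := by
        gcongr; exact norm_inner_mul_inner_le_of_norm_eq_one he a b
    _ ≤ 1 / 4 * (‖a‖ * ‖b‖) ^ (2 * r) + 3 / 4 * ((‖a‖ * ‖b‖) ^ r * ‖inner ℂ a b‖ ^ r) :=
        rpow_two_mul_half_add_le (norm_nonneg _) hCB hr
    _ ≤ _ := quarter_add_three_quarters_le_of_le hβ hpow
    _ = _ := by simp only [Real.mul_rpow (norm_nonneg a) (norm_nonneg b)]
end

section
/- Let a, b, e be vectors in a complex inner product space H with ‖e‖ = 1, let α ∈ ℂ with α ≠ 0, let β ≥ 0, and let n be a natural number. Set λ₁ = (β + (β+1)·max{1, |α−1|²}) / (|α|²(β+1)) and λ₂ = (1 + 2(β+1)·max{1, |α−1|}) / (|α|²(β+1)). Then |⟨a,e⟩·⟨e,b⟩|^{2n} ≤ Σ_{k=0}^{n} C(n,k)·λ₁^{k}·λ₂^{n−k}·‖a‖^{2k}‖b‖^{2k}·‖a‖^{n−k}‖b‖^{n−k}·|⟨a,b⟩|^{n−k}, where C(n,k) is the binomial coefficient. -/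
/-! Split `b = v + w` with `v = ⟪e, b⟫ • e ⟂ w`. Then
`α ⟪a, e⟫ ⟪e, b⟫ - ⟪a, b⟫ = ⟪a, (α - 1) • v - w⟫`, and Pythagoras bounds
`‖(α - 1) • v - w‖ ≤ max 1 ‖α - 1‖ * ‖b‖`, which gives the linear bound
`‖α‖ ‖⟪a, e⟫ ⟪e, b⟫‖ ≤ max 1 ‖α - 1‖ ‖a‖ ‖b‖ + ‖⟪a, b⟫‖`. Squaring it and trading
`(β + 1) ‖⟪a, b⟫‖²` for `β ‖a‖² ‖b‖² + ‖a‖ ‖b‖ ‖⟪a, b⟫‖` (Cauchy–Schwarz) gives the case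
`n = 1`; the general case is its `n`-th power, expanded by the binomial theorem. -/

open scoped InnerProductSpace

section Orthogonal

variable {𝕜 E : Type*} [RCLike 𝕜] [NormedAddCommGroup E] [InnerProductSpace 𝕜 E]

theorem norm_smul_add_smul_le_of_inner_eq_zero {v w : E} (h : ⟪v, w⟫_𝕜 = 0) (c d : 𝕜) :
    ‖c • v + d • w‖ ≤ max ‖c‖ ‖d‖ * ‖v + w‖ := by
  have hcd : ⟪c • v, d • w⟫_𝕜 = 0 := by simp [inner_smul_left, inner_smul_right, h]
  refine le_of_sq_le_sq ?_ (by positivity)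
  calc ‖c • v + d • w‖ ^ 2 = ‖c‖ ^ 2 * ‖v‖ ^ 2 + ‖d‖ ^ 2 * ‖w‖ ^ 2 := by
        rw [sq, norm_add_sq_eq_norm_sq_add_norm_sq_of_inner_eq_zero _ _ hcd, norm_smul, norm_smul]
        ring
    _ ≤ max ‖c‖ ‖d‖ ^ 2 * ‖v‖ ^ 2 + max ‖c‖ ‖d‖ ^ 2 * ‖w‖ ^ 2 := by
        gcongr
        exacts [le_max_left _ _, le_max_right _ _]
    _ = (max ‖c‖ ‖d‖ * ‖v + w‖) ^ 2 := by
        rw [mul_pow, sq ‖v + w‖, norm_add_sq_eq_norm_sq_add_norm_sq_of_inner_eq_zero _ _ h]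
        ring

theorem inner_sub_inner_smul_eq_zero {e : E} (he : ‖e‖ = 1) (b : E) :
    ⟪e, b - ⟪e, b⟫_𝕜 • e⟫_𝕜 = 0 := by
  rw [inner_sub_right, inner_smul_right, inner_self_eq_norm_sq_to_K, he]
  simp

end Orthogonal

theorem norm_mul_norm_inner_mul_inner_le {H : Type*} [NormedAddCommGroup H]
    [InnerProductSpace ℂ H] (a b : H) {e : H} (he : ‖e‖ = 1) (α : ℂ) :
    ‖α‖ * ‖⟪a, e⟫_ℂ * ⟪e, b⟫_ℂ‖ ≤ max 1 ‖α - 1‖ * (‖a‖ * ‖b‖) + ‖⟪a, b⟫_ℂ‖ := by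
  set v := ⟪e, b⟫_ℂ • e
  have hvw : ⟪v, b - v⟫_ℂ = 0 := by
    rw [inner_smul_left, inner_sub_inner_smul_eq_zero he, mul_zero]
  have hy : α • v - b = (α - 1) • v + (-1 : ℂ) • (b - v) := by
    rw [sub_smul, neg_one_smul, one_smul]; abel
  have hy_norm : ‖α • v - b‖ ≤ max 1 ‖α - 1‖ * ‖b‖ := by
    have := norm_smul_add_smul_le_of_inner_eq_zero hvw (α - 1) (-1)
    rwa [← hy, add_sub_cancel, norm_neg, norm_one, max_comm] at this
  have hid : α * (⟪a, e⟫_ℂ * ⟪e, b⟫_ℂ) = ⟪a, α • v - b⟫_ℂ + ⟪a, b⟫_ℂ := by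
    rw [inner_sub_right, inner_smul_right, inner_smul_right]
    ring
  calc ‖α‖ * ‖⟪a, e⟫_ℂ * ⟪e, b⟫_ℂ‖ = ‖⟪a, α • v - b⟫_ℂ + ⟪a, b⟫_ℂ‖ := by rw [← norm_mul, hid]
    _ ≤ ‖a‖ * ‖α • v - b‖ + ‖⟪a, b⟫_ℂ‖ := norm_add_le_of_le (norm_inner_le_norm _ _) le_rfl
    _ ≤ max 1 ‖α - 1‖ * (‖a‖ * ‖b‖) + ‖⟪a, b⟫_ℂ‖ := by
        have := mul_le_mul_of_nonneg_left hy_norm (norm_nonneg a)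
        linarith [mul_left_comm ‖a‖ (max 1 ‖α - 1‖) ‖b‖]

theorem sq_le_of_mul_le_add {r β m s c p : ℝ} (hr : 0 < r) (hβ : 0 ≤ β) (hc : 0 ≤ c)
    (hcs : c ≤ s) (hp : 0 ≤ p) (h : r * p ≤ m * s + c) :
    p ^ 2 ≤ (β + (β + 1) * m ^ 2) / (r ^ 2 * (β + 1)) * s ^ 2
      + (1 + 2 * (β + 1) * m) / (r ^ 2 * (β + 1)) * (s * c) := by
  have hc_sq : (β + 1) * c ^ 2 ≤ β * s ^ 2 + s * c := by
    nlinarith [mul_le_mul_of_nonneg_left hcs hc, mul_le_mul hcs hcs hc (hc.trans hcs)]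
  rw [div_mul_eq_mul_div, div_mul_eq_mul_div, ← add_div, le_div_iff₀ (by positivity)]
  nlinarith [pow_le_pow_left₀ (by positivity) h 2]

theorem max_one_sq_of_nonneg {t : ℝ} (ht : 0 ≤ t) : max 1 (t ^ 2) = max 1 t ^ 2 := by
  rcases le_total t 1 with h | h
  · rw [max_eq_left (pow_le_one₀ ht h), max_eq_left h, one_pow]
  · rw [max_eq_right (one_le_pow₀ h), max_eq_right h]

/-- Binomial expansion of the extended Buzano inequality with parameters
`α ∈ ℂ \ {0}`, `β ≥ 0` and `n ∈ ℕ`. -/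
theorem extended_buzano_pow {H : Type*} [NormedAddCommGroup H] [InnerProductSpace ℂ H]
    (a b e : H) (he : ‖e‖ = 1) (α : ℂ) (hα : α ≠ 0) (β : ℝ) (hβ : 0 ≤ β) (n : ℕ) :
    ‖(inner ℂ a e : ℂ) * (inner ℂ e b : ℂ)‖ ^ (2 * n) ≤
      ∑ k ∈ Finset.range (n + 1),
        (n.choose k : ℝ)
          * ((β + (β + 1) * max 1 (‖α - 1‖ ^ 2)) / (‖α‖ ^ 2 * (β + 1))) ^ k
          * ((1 + 2 * (β + 1) * max 1 ‖α - 1‖) / (‖α‖ ^ 2 * (β + 1))) ^ (n - k)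
          * (‖a‖ ^ (2 * k) * ‖b‖ ^ (2 * k))
          * (‖a‖ ^ (n - k) * ‖b‖ ^ (n - k))
          * ‖(inner ℂ a b : ℂ)‖ ^ (n - k) := by
  have hsq := sq_le_of_mul_le_add (norm_pos_iff.2 hα) hβ (norm_nonneg _)
    (norm_inner_le_norm a b) (norm_nonneg _) (norm_mul_norm_inner_mul_inner_le a b he α)
  rw [← max_one_sq_of_nonneg (norm_nonneg _)] at hsq
  rw [pow_mul]
  refine (pow_le_pow_left₀ (sq_nonneg _) hsq n).trans_eq ?_
  rw [add_pow]
  refine Finset.sum_congr rfl fun k _ => ?_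
  simp only [mul_pow]
  ring
end

section
/- Let H be a complex Hilbert space, M ∈ B(H), α ∈ ℂ with α ≠ 0, and β ≥ 0. Set δ₁ = (2(β+1)·max{1, |α−1|²} + 2β) / (|α|²(β+1)) and δ₂ = 2 / (|α|²(β+1)). Then ω(M)⁴ ≤ (δ₁/4)·‖ |M|² + |M*|² ‖² + δ₂·ω(M²)². -/
open ContinuousLinearMap in
/-- The numerical radius `ω(A) = sup { |⟨A x, x⟩| : ‖x‖ = 1 }` of a bounded operator. -/
noncomputable def numRad {H : Type*} [NormedAddCommGroup H] [InnerProductSpace ℂ H]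
    (A : H →L[ℂ] H) : ℝ :=
  sSup {t : ℝ | ∃ x : H, ‖x‖ = 1 ∧ t = ‖(inner ℂ (A x) x : ℂ)‖}

/-- The absolute value `|A| = (A*A)^{1/2}` of a bounded operator, via the continuous
functional calculus. -/
noncomputable def absOp {E F : Type*} [NormedAddCommGroup E] [InnerProductSpace ℂ E]
    [CompleteSpace E] [NormedAddCommGroup F] [InnerProductSpace ℂ F] [CompleteSpace F]
    (A : E →L[ℂ] F) : E →L[ℂ] E :=
  cfc Real.sqrt ((ContinuousLinearMap.adjoint A).comp A)

open ContinuousLinearMap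

/-! The estimate reduces to the Abu-Omar–Kittaneh bound
`ω(M)² ≤ ‖M*M + MM*‖ / 4 + ω(M²) / 2`. For a unit vector `x`, rotate `M` to `T = φ M` with
`⟨T x, x⟩ = |⟨M x, x⟩|`; then `2 |⟨M x, x⟩| = ⟨(T + T*) x, x⟩ ≤ ‖(T + T*) x‖`, and
`‖(T + T*) x‖² = ‖M x‖² + ‖M* x‖² + 2 Re ⟨T² x, x⟩`. Squaring, together with
`ω(M²) ≤ ‖M*M + MM*‖ / 2` and `|α|² ≤ 2 (max 1 |α - 1|² + 1)`, gives the stated bound. -/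

lemma Complex.exists_norm_eq_one_mul_eq_norm (c : ℂ) : ∃ φ : ℂ, ‖φ‖ = 1 ∧ φ * c = ‖c‖ := by
  refine ⟨exp (↑(-arg c) * I), norm_exp_ofReal_mul_I _, ?_⟩
  conv_lhs => rw [← norm_mul_exp_arg_mul_I c]
  rw [mul_left_comm, ← exp_add]
  push_cast
  simp

section NumericalRadius

variable {H : Type*} [NormedAddCommGroup H] [InnerProductSpace ℂ H]

lemma ContinuousLinearMap.norm_inner_apply_self_le (A : H →L[ℂ] H) (x : H) :
    ‖(inner ℂ (A x) x : ℂ)‖ ≤ ‖A‖ * ‖x‖ ^ 2 :=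
  calc ‖(inner ℂ (A x) x : ℂ)‖ ≤ ‖A x‖ * ‖x‖ := norm_inner_le_norm _ _
    _ ≤ ‖A‖ * ‖x‖ * ‖x‖ := by gcongr; exact A.le_opNorm x
    _ = ‖A‖ * ‖x‖ ^ 2 := by ring

lemma numRad_bddAbove (A : H →L[ℂ] H) :
    BddAbove {t : ℝ | ∃ x : H, ‖x‖ = 1 ∧ t = ‖(inner ℂ (A x) x : ℂ)‖} := by
  refine ⟨‖A‖, ?_⟩
  rintro t ⟨x, hx, rfl⟩
  simpa [hx] using A.norm_inner_apply_self_le x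

lemma norm_inner_le_numRad (A : H →L[ℂ] H) {x : H} (hx : ‖x‖ = 1) :
    ‖(inner ℂ (A x) x : ℂ)‖ ≤ numRad A :=
  le_csSup (numRad_bddAbove A) ⟨x, hx, rfl⟩

lemma numRad_nonneg (A : H →L[ℂ] H) : 0 ≤ numRad A :=
  Real.sSup_nonneg fun _ ⟨_, _, ht⟩ ↦ ht ▸ norm_nonneg _

lemma numRad_le_of_forall {A : H →L[ℂ] H} {C : ℝ} (hC : 0 ≤ C)
    (h : ∀ x : H, ‖x‖ = 1 → ‖(inner ℂ (A x) x : ℂ)‖ ≤ C) : numRad A ≤ C :=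
  Real.sSup_le (fun _ ⟨x, hx, ht⟩ ↦ ht ▸ h x hx) hC

lemma numRad_sq_le_of_forall {A : H →L[ℂ] H} {C : ℝ} (hC : 0 ≤ C)
    (h : ∀ x : H, ‖x‖ = 1 → ‖(inner ℂ (A x) x : ℂ)‖ ^ 2 ≤ C) : numRad A ^ 2 ≤ C := by
  have hle : numRad A ≤ √C :=
    numRad_le_of_forall (Real.sqrt_nonneg C) fun x hx ↦ Real.le_sqrt_of_sq_le (h x hx)
  calc numRad A ^ 2 ≤ √C ^ 2 := by gcongr; exact numRad_nonneg A
    _ = C := Real.sq_sqrt hC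

end NumericalRadius

section Adjoint

variable {H : Type*} [NormedAddCommGroup H] [InnerProductSpace ℂ H] [CompleteSpace H]

lemma ContinuousLinearMap.inner_sq_apply_self (T : H →L[ℂ] H) (x : H) :
    (inner ℂ ((T ^ 2) x) x : ℂ) = inner ℂ (T x) (adjoint T x) := by
  rw [adjoint_inner_right, pow_two]
  rfl

lemma ContinuousLinearMap.norm_add_adjoint_apply_sq (T : H →L[ℂ] H) (x : H) :
    ‖(T + adjoint T) x‖ ^ 2
      = ‖T x‖ ^ 2 + ‖adjoint T x‖ ^ 2 + 2 * (inner ℂ ((T ^ 2) x) x : ℂ).re := by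
  rw [add_apply, norm_add_sq (𝕜 := ℂ), T.inner_sq_apply_self]
  simp only [RCLike.re_to_complex]
  ring

lemma ContinuousLinearMap.two_mul_re_inner_apply_self_sq_le (T : H →L[ℂ] H) {x : H}
    (hx : ‖x‖ = 1) :
    (2 * (inner ℂ (T x) x : ℂ).re) ^ 2
      ≤ ‖T x‖ ^ 2 + ‖adjoint T x‖ ^ 2 + 2 * (inner ℂ ((T ^ 2) x) x : ℂ).re := by
  have hre : 2 * (inner ℂ (T x) x : ℂ).re = (inner ℂ ((T + adjoint T) x) x : ℂ).re := by
    rw [add_apply, inner_add_left, adjoint_inner_left, ← inner_conj_symm (T x)]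
    simp only [Complex.add_re, Complex.conj_re]
    ring
  rw [hre, ← T.norm_add_adjoint_apply_sq]
  calc (inner ℂ ((T + adjoint T) x) x : ℂ).re ^ 2
      ≤ ‖(inner ℂ ((T + adjoint T) x) x : ℂ)‖ ^ 2 := by
        rw [← sq_abs]; gcongr; exact Complex.abs_re_le_norm _
    _ ≤ ‖(T + adjoint T) x‖ ^ 2 := by
        gcongr
        exact (norm_inner_le_norm _ _).trans_eq (by rw [hx, mul_one])

lemma ContinuousLinearMap.four_mul_norm_inner_apply_self_sq_le (M : H →L[ℂ] H) {x : H}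
    (hx : ‖x‖ = 1) :
    4 * ‖(inner ℂ (M x) x : ℂ)‖ ^ 2
      ≤ ‖M x‖ ^ 2 + ‖adjoint M x‖ ^ 2 + 2 * ‖(inner ℂ ((M ^ 2) x) x : ℂ)‖ := by
  obtain ⟨φ, hφ, hφc⟩ := Complex.exists_norm_eq_one_mul_eq_norm (inner ℂ (M x) x)
  have h := (star φ • M).two_mul_re_inner_apply_self_sq_le hx
  have hT : (inner ℂ ((star φ • M) x) x : ℂ) = ‖(inner ℂ (M x) x : ℂ)‖ := by
    rw [smul_apply, inner_smul_left, ← hφc]; simp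
  have hTadj : ‖adjoint (star φ • M) x‖ = ‖adjoint M x‖ := by
    rw [map_smulₛₗ, smul_apply, norm_smul, RCLike.norm_conj, norm_star, hφ, one_mul]
  have hT2 : (inner ℂ (((star φ • M) ^ 2) x) x : ℂ).re ≤ ‖(inner ℂ ((M ^ 2) x) x : ℂ)‖ := by
    rw [smul_pow, smul_apply, inner_smul_left]
    calc _ ≤ ‖(starRingEnd ℂ) (star φ ^ 2) * (inner ℂ ((M ^ 2) x) x : ℂ)‖ := Complex.re_le_norm _
      _ = ‖(inner ℂ ((M ^ 2) x) x : ℂ)‖ := by simp [hφ]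
  rw [hT, Complex.ofReal_re, hTadj, smul_apply, norm_smul, norm_star, hφ, one_mul] at h
  linarith

lemma ContinuousLinearMap.norm_apply_sq_add_norm_adjoint_apply_sq_le (M : H →L[ℂ] H) {x : H}
    (hx : ‖x‖ = 1) : ‖M x‖ ^ 2 + ‖adjoint M x‖ ^ 2 ≤ ‖adjoint M * M + M * adjoint M‖ := by
  have hre : ‖M x‖ ^ 2 + ‖adjoint M x‖ ^ 2
      = (inner ℂ ((adjoint M * M + M * adjoint M) x) x : ℂ).re := by
    rw [M.apply_norm_sq_eq_inner_adjoint_left, (adjoint M).apply_norm_sq_eq_inner_adjoint_left,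
      adjoint_adjoint, add_apply, inner_add_left, Complex.add_re]
    rfl
  calc _ = _ := hre
    _ ≤ _ := Complex.re_le_norm _
    _ ≤ _ := by simpa [hx] using (adjoint M * M + M * adjoint M).norm_inner_apply_self_le x

lemma numRad_pow_two_le_half_norm (M : H →L[ℂ] H) :
    numRad (M ^ 2) ≤ ‖adjoint M * M + M * adjoint M‖ / 2 := by
  refine numRad_le_of_forall (by positivity) fun x hx ↦ ?_
  have hsum := M.norm_apply_sq_add_norm_adjoint_apply_sq_le hx
  rw [M.inner_sq_apply_self]
  calc ‖(inner ℂ (M x) (adjoint M x) : ℂ)‖ ≤ ‖M x‖ * ‖adjoint M x‖ := norm_inner_le_norm _ _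
    _ ≤ (‖M x‖ ^ 2 + ‖adjoint M x‖ ^ 2) / 2 := by nlinarith [sq_nonneg (‖M x‖ - ‖adjoint M x‖)]
    _ ≤ _ := by linarith

lemma numRad_sq_le_add (M : H →L[ℂ] H) :
    numRad M ^ 2 ≤ ‖adjoint M * M + M * adjoint M‖ / 4 + numRad (M ^ 2) / 2 := by
  refine numRad_sq_le_of_forall (by positivity [numRad_nonneg (M ^ 2)]) fun x hx ↦ ?_
  have := M.four_mul_norm_inner_apply_self_sq_le hx
  have := M.norm_apply_sq_add_norm_adjoint_apply_sq_le hx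
  have := norm_inner_le_numRad (M ^ 2) hx
  linarith

lemma numRad_pow_four_le (M : H →L[ℂ] H) :
    numRad M ^ 4 ≤ (‖adjoint M * M + M * adjoint M‖ ^ 2 + 4 * numRad (M ^ 2) ^ 2) / 8 := by
  set u := ‖adjoint M * M + M * adjoint M‖
  set v := numRad (M ^ 2)
  calc numRad M ^ 4 = (numRad M ^ 2) ^ 2 := by ring
    _ ≤ (u / 4 + v / 2) ^ 2 := by gcongr; exact numRad_sq_le_add M
    _ ≤ (u ^ 2 + 4 * v ^ 2) / 8 := by nlinarith [sq_nonneg (u - 2 * v)]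

end Adjoint

lemma norm_sq_le_two_mul_max_add_one (α : ℂ) : ‖α‖ ^ 2 ≤ 2 * (max 1 (‖α - 1‖ ^ 2) + 1) := by
  have htri : ‖α‖ ≤ ‖α - 1‖ + 1 := by simpa using norm_add_le (α - 1) 1
  have : ‖α‖ ^ 2 ≤ 2 * (‖α - 1‖ ^ 2 + 1) := by
    nlinarith [norm_nonneg α, sq_nonneg (‖α - 1‖ - 1)]
  have := le_max_right 1 (‖α - 1‖ ^ 2)
  linarith

/-- Corollary `MOBY-A2`: fourth-power numerical radius bound for a single operator
with parameters `α ∈ ℂ \ {0}` and `β ≥ 0`. -/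
theorem numRad_pow_four_bound {H : Type*}
    [NormedAddCommGroup H] [InnerProductSpace ℂ H] [CompleteSpace H]
    (M : H →L[ℂ] H) (α : ℂ) (hα : α ≠ 0) (β : ℝ) (hβ : 0 ≤ β) :
    numRad M ^ 4 ≤
      (2 * (β + 1) * max 1 (‖α - 1‖ ^ 2) + 2 * β) / (‖α‖ ^ 2 * (β + 1)) / 4
          * ‖adjoint M * M + M * adjoint M‖ ^ 2
        + 2 / (‖α‖ ^ 2 * (β + 1)) * numRad (M ^ 2) ^ 2 := by
  set u := ‖adjoint M * M + M * adjoint M‖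
  set v := numRad (M ^ 2)
  set m := max 1 (‖α - 1‖ ^ 2)
  set k := (m + 1) * (β + 1)
  have hk : 2 ≤ k := by nlinarith [le_max_left 1 (‖α - 1‖ ^ 2)]
  have hc : 0 < ‖α‖ ^ 2 * (β + 1) := by positivity
  have hck : ‖α‖ ^ 2 * (β + 1) ≤ 2 * k := by
    nlinarith [norm_sq_le_two_mul_max_add_one α]
  have hv : 0 ≤ v := numRad_nonneg _
  have hvu : 2 * v ≤ u := by linarith [numRad_pow_two_le_half_norm M]
  -- `2 (β + 1) m + 2 β = 2 (k - 1)`, which is where `k` comes from.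
  have hnum : 0 ≤ (k - 1) / 2 * u ^ 2 + 2 * v ^ 2 := by nlinarith
  calc numRad M ^ 4 ≤ (u ^ 2 + 4 * v ^ 2) / 8 := numRad_pow_four_le M
    _ ≤ ((k - 1) / 2 * u ^ 2 + 2 * v ^ 2) / (2 * k) := by
        rw [div_le_div_iff₀ (by norm_num) (by positivity)]
        have : 0 ≤ (k - 2) * ((u - 2 * v) * (u + 2 * v)) :=
          mul_nonneg (sub_nonneg.2 hk) (mul_nonneg (sub_nonneg.2 hvu) (by linarith))
        nlinarith
    _ ≤ ((k - 1) / 2 * u ^ 2 + 2 * v ^ 2) / (‖α‖ ^ 2 * (β + 1)) := by gcongr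
    _ = _ := by field_simp; ring
end

section
/- Let H be a complex Hilbert space, A₁, A₂, B₁, B₂, X₁, X₂ ∈ B(H), let r ≥ 2 be a real number, and let α ∈ [0,1]. Let 𝔸, 𝔹, 𝕐 be the operators on H ⊕ H given by 𝔸(x, y) = (A₁ y, A₂ x), 𝔹(x, y) = (B₁ y, B₂ x), 𝕐(x, y) = (X₁ y, X₂ x). Then ω( |𝔸|^{α} · 𝕐 · |𝔹|^{1−α} )^{r} ≤ max{ ‖X₁‖^{r}, ‖X₂‖^{r} } · max{ ‖ α·|A₂|^{r} + (1−α)·|B₂|^{r} ‖, ‖ α·|A₁|^{r} + (1−α)·|B₁|^{r} ‖ }, where all real powers of positive operators are defined via the continuous functional calculus. -/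
open ContinuousLinearMap RCLike

lemma Real.rpow_le_tangent_line {q s t : ℝ} (hq0 : 0 ≤ q) (hq1 : q ≤ 1) (hs : 0 < s)
    (ht : 0 ≤ t) : t ^ q ≤ q * s ^ (q - 1) * t + (1 - q) * s ^ q := by
  have amgm := Real.geom_mean_le_arith_mean2_weighted hq0 (sub_nonneg.2 hq1) ht hs.le
    (add_sub_cancel q 1)
  calc t ^ q = t ^ q * s ^ (1 - q) * s ^ (q - 1) := by
        rw [mul_assoc, ← Real.rpow_add hs, sub_add_sub_cancel, sub_self, Real.rpow_zero, mul_one]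
    _ ≤ (q * t + (1 - q) * s) * s ^ (q - 1) := by gcongr
    _ = q * s ^ (q - 1) * t + (1 - q) * s ^ (q - 1 + 1) := by
        rw [Real.rpow_add_one hs.ne']; ring
    _ = q * s ^ (q - 1) * t + (1 - q) * s ^ q := by rw [sub_add_cancel]

lemma cfc_rpow_nonneg {A : Type*} [CStarAlgebra A] [PartialOrder A] [StarOrderedRing A] {a : A}
    (ha : 0 ≤ a) (r : ℝ) : 0 ≤ cfc (fun t : ℝ => t ^ r) a :=
  cfc_nonneg fun _ ht => Real.rpow_nonneg (spectrum_nonneg_of_nonneg ha ht) r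

lemma absOp_nonneg {E F : Type*} [NormedAddCommGroup E] [InnerProductSpace ℂ E]
    [CompleteSpace E] [NormedAddCommGroup F] [InnerProductSpace ℂ F] [CompleteSpace F]
    (A : E →L[ℂ] F) : 0 ≤ absOp A :=
  cfc_nonneg fun x _ => Real.sqrt_nonneg x

section HilbertSpace

variable {E : Type*} [NormedAddCommGroup E] [InnerProductSpace ℂ E]

lemma re_inner_apply_nonneg_of_nonneg {A : E →L[ℂ] E} (h : 0 ≤ A) (z : E) :
    0 ≤ re (inner ℂ (A z) z) :=
  ((nonneg_iff_isPositive A).1 h).re_inner_nonneg_left z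

lemma re_inner_apply_le_of_le {A B : E →L[ℂ] E} (h : A ≤ B) (z : E) :
    re (inner ℂ (A z) z) ≤ re (inner ℂ (B z) z) := by
  simpa [inner_sub_left] using ((le_def A B).1 h).re_inner_nonneg_left z

lemma re_inner_apply_le_norm (A : E →L[ℂ] E) {z : E} (hz : ‖z‖ = 1) :
    re (inner ℂ (A z) z) ≤ ‖A‖ := by
  simpa [hz] using (re_inner_le_norm (𝕜 := ℂ) (A z) z).trans
    (mul_le_mul_of_nonneg_right (A.le_opNorm z) (norm_nonneg z))

lemma numRad_nonneg_s19 (T : E →L[ℂ] E) : 0 ≤ numRad T :=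
  Real.sSup_nonneg (by rintro _ ⟨z, -, rfl⟩; exact norm_nonneg _)

lemma numRad_rpow_le {T : E →L[ℂ] E} {r C : ℝ} (hr : 0 < r) (hC : 0 ≤ C)
    (h : ∀ z : E, ‖z‖ = 1 → ‖inner ℂ (T z) z‖ ^ r ≤ C) : numRad T ^ r ≤ C := by
  rw [← Real.le_rpow_inv_iff_of_pos (numRad_nonneg_s19 T) hC hr]
  refine Real.sSup_le ?_ (by positivity)
  rintro _ ⟨z, hz, rfl⟩
  exact (Real.le_rpow_inv_iff_of_pos (norm_nonneg _) hC hr).2 (h z hz)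

variable [CompleteSpace E]

/-- McCarthy's inequality. -/
lemma re_inner_cfc_rpow_le {Q : E →L[ℂ] E} (hQ : 0 ≤ Q) {q : ℝ} (hq0 : 0 ≤ q) (hq1 : q ≤ 1)
    {z : E} (hz : ‖z‖ = 1) :
    re (inner ℂ (cfc (fun t : ℝ => t ^ q) Q z) z) ≤ re (inner ℂ (Q z) z) ^ q := by
  set m := re (inner ℂ (Q z) z)
  have hm : 0 ≤ m := re_inner_apply_nonneg_of_nonneg hQ z
  have tangent (s : ℝ) (hs : 0 < s) :
      re (inner ℂ (cfc (fun t : ℝ => t ^ q) Q z) z) ≤ q * s ^ (q - 1) * m + (1 - q) * s ^ q := by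
    have hle : cfc (fun t : ℝ => t ^ q) Q ≤
        cfc (fun t : ℝ => q * s ^ (q - 1) * t + (1 - q) * s ^ q) Q :=
      cfc_mono fun t ht => Real.rpow_le_tangent_line hq0 hq1 hs (spectrum_nonneg_of_nonneg hQ ht)
    rw [cfc_add .., cfc_const_mul_id .., cfc_const ..] at hle
    simpa [m, inner_add_left, Algebra.algebraMap_eq_smul_one, inner_smul_real_left, hz]
      using re_inner_apply_le_of_le hle z
  -- Tangent lines at points `s > m` lie below `s ^ q`; let `s` decrease to `m`.
  have above (s : ℝ) (hs : m < s) : re (inner ℂ (cfc (fun t : ℝ => t ^ q) Q z) z) ≤ s ^ q := by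
    have hs0 : 0 < s := hm.trans_lt hs
    calc _ ≤ q * s ^ (q - 1) * m + (1 - q) * s ^ q := tangent s hs0
      _ ≤ q * s ^ (q - 1) * s + (1 - q) * s ^ q := by gcongr
      _ = s ^ q := by rw [mul_assoc, ← Real.rpow_add_one hs0.ne', sub_add_cancel]; ring
  have hlim : Filter.Tendsto (fun s : ℝ => s ^ q) (nhdsWithin m (Set.Ioi m)) (nhds (m ^ q)) :=
    (Real.continuousAt_rpow_const m q (Or.inr hq0)).tendsto.mono_left nhdsWithin_le_nhds
  exact ge_of_tendsto hlim (eventually_nhdsWithin_of_forall above)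

lemma norm_cfc_rpow_apply_rpow_le {P : E →L[ℂ] E} (hP : 0 ≤ P) {β r : ℝ} (hβ : 0 ≤ β)
    (hr : 0 < r) (hβr : 2 * β ≤ r) {z : E} (hz : ‖z‖ = 1) :
    ‖cfc (fun t : ℝ => t ^ β) P z‖ ^ r ≤ re (inner ℂ (cfc (fun t : ℝ => t ^ r) P z) z) ^ β := by
  set F := cfc (fun t : ℝ => t ^ β) P
  set m := re (inner ℂ (cfc (fun t : ℝ => t ^ r) P z) z)
  have hm : 0 ≤ m := re_inner_apply_nonneg_of_nonneg (cfc_rpow_nonneg hP r) z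
  have hFF : adjoint F ∘L F = cfc (fun t : ℝ => t ^ (2 * β / r)) (cfc (fun t : ℝ => t ^ r) P) := by
    calc adjoint F ∘L F = F * F := by rw [(cfc_predicate _ _ : IsSelfAdjoint F).adjoint_eq]; rfl
      _ = cfc (fun t : ℝ => t ^ β * t ^ β) P := (cfc_mul ..).symm
      _ = cfc (fun t : ℝ => (t ^ r) ^ (2 * β / r)) P := cfc_congr fun t ht => by
          have ht : 0 ≤ t := spectrum_nonneg_of_nonneg hP ht
          rw [← Real.rpow_mul ht, show r * (2 * β / r) = β * 2 by field_simp, Real.rpow_mul ht,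
            Real.rpow_two, sq]
      _ = _ := cfc_comp' (fun t : ℝ => t ^ (2 * β / r)) (fun t : ℝ => t ^ r) P
          (Real.continuous_rpow_const (by positivity)).continuousOn
          (Real.continuous_rpow_const hr.le).continuousOn
  have hsq : ‖F z‖ ^ 2 ≤ m ^ (2 * β / r) := by
    rw [apply_norm_sq_eq_inner_adjoint_left, hFF]
    exact re_inner_cfc_rpow_le (cfc_rpow_nonneg hP r) (by positivity) ((div_le_one hr).2 hβr) hz
  calc ‖F z‖ ^ r = (‖F z‖ ^ 2) ^ (r / 2) := by
        rw [← Real.rpow_natCast, ← Real.rpow_mul (norm_nonneg _)]; congr 1; ring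
    _ ≤ (m ^ (2 * β / r)) ^ (r / 2) := by gcongr
    _ = m ^ β := by rw [← Real.rpow_mul hm]; congr 1; field_simp

lemma norm_inner_cfc_rpow_mul_mul_cfc_rpow_le {P Q : E →L[ℂ] E} (hP : 0 ≤ P) (hQ : 0 ≤ Q)
    (Y : E →L[ℂ] E) {α r : ℝ} (hα0 : 0 ≤ α) (hα1 : α ≤ 1) (hr : 2 ≤ r) {z : E} (hz : ‖z‖ = 1) :
    ‖inner ℂ ((cfc (fun t : ℝ => t ^ α) P * Y * cfc (fun t : ℝ => t ^ (1 - α)) Q) z) z‖ ^ r ≤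
      ‖Y‖ ^ r * re (inner ℂ ((α • cfc (fun t : ℝ => t ^ r) P
        + (1 - α) • cfc (fun t : ℝ => t ^ r) Q) z) z) := by
  set F := cfc (fun t : ℝ => t ^ α) P
  set G := cfc (fun t : ℝ => t ^ (1 - α)) Q
  set b := re (inner ℂ (cfc (fun t : ℝ => t ^ r) P z) z)
  set a := re (inner ℂ (cfc (fun t : ℝ => t ^ r) Q z) z)
  have hb : 0 ≤ b := re_inner_apply_nonneg_of_nonneg (cfc_rpow_nonneg hP r) z
  have ha : 0 ≤ a := re_inner_apply_nonneg_of_nonneg (cfc_rpow_nonneg hQ r) z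
  have hFz : ‖F z‖ ^ r ≤ b ^ α :=
    norm_cfc_rpow_apply_rpow_le hP hα0 (by linarith) (by linarith) hz
  have hGz : ‖G z‖ ^ r ≤ a ^ (1 - α) :=
    norm_cfc_rpow_apply_rpow_le hQ (by linarith) (by linarith) (by linarith) hz
  have hinner : inner ℂ ((F * Y * G) z) z = inner ℂ (Y (G z)) (F z) :=
    (cfc_predicate _ _ : IsSelfAdjoint F).isSymmetric _ _
  calc ‖inner ℂ ((F * Y * G) z) z‖ ^ r ≤ (‖Y‖ * ‖G z‖ * ‖F z‖) ^ r := by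
        rw [hinner]
        gcongr
        exact (norm_inner_le_norm _ _).trans (by gcongr; exact Y.le_opNorm _)
    _ = ‖Y‖ ^ r * (‖F z‖ ^ r * ‖G z‖ ^ r) := by
        rw [Real.mul_rpow (by positivity) (by positivity),
          Real.mul_rpow (by positivity) (by positivity)]
        ring
    _ ≤ ‖Y‖ ^ r * (b ^ α * a ^ (1 - α)) := by gcongr
    _ ≤ ‖Y‖ ^ r * (α * b + (1 - α) * a) := by
        gcongr
        exact Real.geom_mean_le_arith_mean2_weighted hα0 (by linarith) hb ha (by ring)
    _ = _ := by simp [a, b]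

theorem numRad_cfc_rpow_mul_mul_cfc_rpow_rpow_le {P Q : E →L[ℂ] E} (hP : 0 ≤ P) (hQ : 0 ≤ Q)
    (Y : E →L[ℂ] E) {α r : ℝ} (hα0 : 0 ≤ α) (hα1 : α ≤ 1) (hr : 2 ≤ r) :
    numRad (cfc (fun t : ℝ => t ^ α) P * Y * cfc (fun t : ℝ => t ^ (1 - α)) Q) ^ r ≤
      ‖Y‖ ^ r * ‖α • cfc (fun t : ℝ => t ^ r) P + (1 - α) • cfc (fun t : ℝ => t ^ r) Q‖ :=
  numRad_rpow_le (by positivity) (by positivity) fun z hz =>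
    (norm_inner_cfc_rpow_mul_mul_cfc_rpow_le hP hQ Y hα0 hα1 hr hz).trans <| by
      gcongr; exact re_inner_apply_le_norm _ hz

end HilbertSpace

namespace WithLp

variable {H : Type*} [NormedAddCommGroup H] [InnerProductSpace ℂ H] [CompleteSpace H]

noncomputable def diagStarAlgHom :
    (H →L[ℂ] H) × (H →L[ℂ] H) →⋆ₐ[ℂ] (WithLp 2 (H × H) →L[ℂ] WithLp 2 (H × H)) where
  toFun p := (prodContinuousLinearEquiv 2 ℂ H H).symm.toContinuousLinearMap ∘L
    p.1.prodMap p.2 ∘L (prodContinuousLinearEquiv 2 ℂ H H).toContinuousLinearMap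
  map_one' := rfl
  map_mul' _ _ := rfl
  map_zero' := rfl
  map_add' _ _ := rfl
  commutes' _ := rfl
  map_star' p := by
    rw [star_eq_adjoint, eq_adjoint_iff]
    intro x y
    simp [prod_inner_apply, star_eq_adjoint, adjoint_inner_left]

@[simp]
lemma diagStarAlgHom_apply (p : (H →L[ℂ] H) × (H →L[ℂ] H)) (z : WithLp 2 (H × H)) :
    diagStarAlgHom p z = toLp 2 (p.1 z.fst, p.2 z.snd) := rfl

lemma real_smul_diagStarAlgHom (c : ℝ) (p : (H →L[ℂ] H) × (H →L[ℂ] H)) :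
    c • diagStarAlgHom p = diagStarAlgHom (c • p) := rfl

-- Injective star homomorphisms of C⋆-algebras are isometric.
lemma norm_diagStarAlgHom (p : (H →L[ℂ] H) × (H →L[ℂ] H)) :
    ‖diagStarAlgHom p‖ = ‖p‖ := by
  refine NonUnitalStarAlgHom.norm_map diagStarAlgHom (fun p q h => ?_) p
  ext x
  · simpa using congr(($h (toLp 2 (x, 0))).fst)
  · simpa using congr(($h (toLp 2 (0, x))).snd)

-- Instance search does not find this one on its own.
noncomputable instance :
    ContinuousFunctionalCalculus ℝ ((H →L[ℂ] H) × (H →L[ℂ] H)) IsSelfAdjoint :=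
  IsSelfAdjoint.instContinuousFunctionalCalculus

open scoped CStarAlgebra in
lemma cfc_diagStarAlgHom {S T : H →L[ℂ] H} (hS : IsSelfAdjoint S) (hT : IsSelfAdjoint T)
    {f : ℝ → ℝ} (hf : Continuous f) :
    cfc f (diagStarAlgHom (S, T)) = diagStarAlgHom (cfc f S, cfc f T) := by
  have hST : IsSelfAdjoint (S, T) := Prod.ext hS hT
  rw [← cfc_map_prod (S := ℂ) f S T hf.continuousOn hST]
  exact (StarAlgHomClass.map_cfc diagStarAlgHom f (S, T) hf.continuousOn
    (map_continuous _) hST (hST.map _)).symm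

/-- The operator matrix `[[0, T₁], [T₂, 0]]`. -/
noncomputable def offDiag (T₁ T₂ : H →L[ℂ] H) : WithLp 2 (H × H) →L[ℂ] WithLp 2 (H × H) :=
  diagStarAlgHom (T₁, T₂) ∘L
    (LinearIsometryEquiv.withLpProdComm 2 ℂ H H : WithLp 2 (H × H) →L[ℂ] WithLp 2 (H × H))

lemma eq_offDiag {T₁ T₂ : H →L[ℂ] H} {𝕋 : WithLp 2 (H × H) →L[ℂ] WithLp 2 (H × H)}
    (h : ∀ x y : H, 𝕋 ((WithLp.equiv 2 (H × H)).symm (x, y))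
        = (WithLp.equiv 2 (H × H)).symm (T₁ y, T₂ x)) :
    𝕋 = offDiag T₁ T₂ := by
  ext z
  exact h z.fst z.snd

lemma norm_offDiag (T₁ T₂ : H →L[ℂ] H) : ‖offDiag T₁ T₂‖ = max ‖T₁‖ ‖T₂‖ := by
  rw [offDiag, opNorm_comp_linearIsometryEquiv, norm_diagStarAlgHom, Prod.norm_mk]

lemma adjoint_comp_offDiag (T₁ T₂ : H →L[ℂ] H) :
    adjoint (offDiag T₁ T₂) ∘L offDiag T₁ T₂
      = diagStarAlgHom (adjoint T₂ ∘L T₂, adjoint T₁ ∘L T₁) := by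
  rw [offDiag, adjoint_comp, LinearIsometryEquiv.adjoint_eq_symm, ← star_eq_adjoint, ← map_star]
  rfl

lemma absOp_offDiag (T₁ T₂ : H →L[ℂ] H) :
    absOp (offDiag T₁ T₂) = diagStarAlgHom (absOp T₂, absOp T₁) := by
  rw [absOp, adjoint_comp_offDiag,
    cfc_diagStarAlgHom (isPositive_adjoint_comp_self T₂).isSelfAdjoint
      (isPositive_adjoint_comp_self T₁).isSelfAdjoint Real.continuous_sqrt]
  rfl

lemma cfc_rpow_absOp_offDiag (T₁ T₂ : H →L[ℂ] H) {r : ℝ} (hr : 0 ≤ r) :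
    cfc (fun t : ℝ => t ^ r) (absOp (offDiag T₁ T₂))
      = diagStarAlgHom
          (cfc (fun t : ℝ => t ^ r) (absOp T₂), cfc (fun t : ℝ => t ^ r) (absOp T₁)) := by
  rw [absOp_offDiag, cfc_diagStarAlgHom (.of_nonneg (absOp_nonneg T₂))
    (.of_nonneg (absOp_nonneg T₁)) (Real.continuous_rpow_const hr)]

end WithLp

open WithLp

/-- Theorem 2.26 (`Theorem 2.26`): numerical radius bound for `|𝔸|^α · 𝕐 · |𝔹|^{1−α}` where
`𝔸, 𝔹, 𝕐` are off-diagonal `2 × 2` operator matrices, `r ≥ 2` and `α ∈ [0,1]`. -/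
theorem offdiag_weighted_product_numRad_bound {H : Type*}
    [NormedAddCommGroup H] [InnerProductSpace ℂ H] [CompleteSpace H]
    (A₁ A₂ B₁ B₂ X₁ X₂ : H →L[ℂ] H) (r : ℝ) (hr : 2 ≤ r)
    (α : ℝ) (hα : α ∈ Set.Icc (0 : ℝ) 1)
    (𝔸 𝔹 𝕐 : WithLp 2 (H × H) →L[ℂ] WithLp 2 (H × H))
    (h𝔸 : ∀ x y : H, 𝔸 ((WithLp.equiv 2 (H × H)).symm (x, y))
        = (WithLp.equiv 2 (H × H)).symm (A₁ y, A₂ x))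
    (h𝔹 : ∀ x y : H, 𝔹 ((WithLp.equiv 2 (H × H)).symm (x, y))
        = (WithLp.equiv 2 (H × H)).symm (B₁ y, B₂ x))
    (h𝕐 : ∀ x y : H, 𝕐 ((WithLp.equiv 2 (H × H)).symm (x, y))
        = (WithLp.equiv 2 (H × H)).symm (X₁ y, X₂ x)) :
    numRad (cfc (fun t : ℝ => t ^ α) (absOp 𝔸) * 𝕐
        * cfc (fun t : ℝ => t ^ (1 - α)) (absOp 𝔹)) ^ r ≤
      max (‖X₁‖ ^ r) (‖X₂‖ ^ r)
        * max (‖α • cfc (fun t : ℝ => t ^ r) (absOp A₂)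
                + (1 - α) • cfc (fun t : ℝ => t ^ r) (absOp B₂)‖)
              (‖α • cfc (fun t : ℝ => t ^ r) (absOp A₁)
                + (1 - α) • cfc (fun t : ℝ => t ^ r) (absOp B₁)‖) := by
  rw [eq_offDiag h𝔸, eq_offDiag h𝔹, eq_offDiag h𝕐]
  have hr0 : 0 ≤ r := by linarith
  calc _ ≤ ‖offDiag X₁ X₂‖ ^ r * ‖α • cfc (fun t : ℝ => t ^ r) (absOp (offDiag A₁ A₂))
          + (1 - α) • cfc (fun t : ℝ => t ^ r) (absOp (offDiag B₁ B₂))‖ :=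
        numRad_cfc_rpow_mul_mul_cfc_rpow_rpow_le (absOp_nonneg _) (absOp_nonneg _) _ hα.1 hα.2 hr
    _ = _ := by
        rw [cfc_rpow_absOp_offDiag _ _ hr0, cfc_rpow_absOp_offDiag _ _ hr0,
          real_smul_diagStarAlgHom, real_smul_diagStarAlgHom, ← map_add, Prod.smul_mk,
          Prod.smul_mk, Prod.mk_add_mk, norm_diagStarAlgHom, Prod.norm_mk, norm_offDiag,
          Real.rpow_max (norm_nonneg _) (norm_nonneg _) hr0]
end
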